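/- Let ⟨·|·⟩ be a strong compatibility support mapping for S. If U₁ ⊆ U₂ are finite subsets of S, then ⟨U₁|V⟩ ≥ ⟨U₂|V⟩ for every finite V ⊆ S. -/
import Mathlib


universe u

/-- An effect algebra: a partial commutative, associative operation `add`
(modelled as an `Option`-valued total operation), with constants `zero`, `one`,
unique orthosupplements, and `a ⊕ 1` defined only for `a = 0`. -/
structure EffectAlgebra (α : Type u) where
  add : α → α → Option α
  zero : α
  one : α
  add_comm : ∀ a b : α, add a b = add b a
  add_assoc : ∀ a b c ab abc : α, add a b = some ab → add ab c = some abc →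
    ∃ bc : α, add b c = some bc ∧ add a bc = some abc
  orthosupp : ∀ a : α, ∃! a' : α, add a a' = some one
  add_one : ∀ a b : α, add a one = some b → a = zero

namespace EffectAlgebra

variable {α : Type u}

/-- The induced order: `a ≤ b` iff `∃ c, a ⊕ c = b`. -/
def le (E : EffectAlgebra α) (a b : α) : Prop := ∃ c, E.add a c = some b

/-- The orthosupplement `a'`. -/
noncomputable def compl (E : EffectAlgebra α) (a : α) : α :=
  (E.orthosupp a).exists.choose

open Classical in
/-- The partial difference `b ⊖ a` (junk value `0` when `a ≤ b` fails). -/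
noncomputable def sub (E : EffectAlgebra α) (b a : α) : α :=
  if h : ∃ c, E.add a c = some b then h.choose else E.zero

/-- Iterated partial sum of a list of elements. -/
noncomputable def osum (E : EffectAlgebra α) : List α → Option α
  | [] => some E.zero
  | a :: l => (E.osum l).bind fun s => E.add a s

end EffectAlgebra

namespace EffectAlgebra

variable {α : Type u}

/-- `f` is a compatibility support mapping for `S` (with `1 ∈ S`). -/
def IsCSM [DecidableEq α] (E : EffectAlgebra α) (S : Set α) (f : Finset α → Finset α → α) : Prop :=
  E.one ∈ S ∧
  (∀ U V₁ V₂ : Finset α, ↑U ⊆ S → ↑V₁ ⊆ S → ↑V₂ ⊆ S → V₁ ⊆ V₂ →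
    E.le (f U V₁) (f U V₂)) ∧
  (∀ U V : Finset α, ↑U ⊆ S → ↑V ⊆ S → E.le (f U V) (f U {E.one})) ∧
  (∀ U : Finset α, ↑U ⊆ S → f U ∅ = E.zero) ∧
  (∀ c ∈ S, f ∅ {c} = c) ∧
  (∀ (U V : Finset α) (c : α), ↑U ⊆ S → ↑V ⊆ S → c ∈ S → c ∉ U → c ∉ V →
    E.sub (f (insert c U) {E.one}) (f (insert c U) V) =
      E.sub (f U (insert c V)) (f U V))

/-- `f` is a strong compatibility support mapping for `S`:
condition (e*) holds with no restriction on `c`. -/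
def IsStrongCSM [DecidableEq α] (E : EffectAlgebra α) (S : Set α) (f : Finset α → Finset α → α) : Prop :=
  E.one ∈ S ∧
  (∀ U V₁ V₂ : Finset α, ↑U ⊆ S → ↑V₁ ⊆ S → ↑V₂ ⊆ S → V₁ ⊆ V₂ →
    E.le (f U V₁) (f U V₂)) ∧
  (∀ U V : Finset α, ↑U ⊆ S → ↑V ⊆ S → E.le (f U V) (f U {E.one})) ∧
  (∀ U : Finset α, ↑U ⊆ S → f U ∅ = E.zero) ∧
  (∀ c ∈ S, f ∅ {c} = c) ∧
  (∀ (U V : Finset α) (c : α), ↑U ⊆ S → ↑V ⊆ S → c ∈ S →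
    E.sub (f (insert c U) {E.one}) (f (insert c U) V) =
      E.sub (f U (insert c V)) (f U V))

/-- `D(X,A) = ⟨X|{1}⟩ ⊖ ⟨X|A∖X⟩`. -/
noncomputable def Dmap [DecidableEq α] (E : EffectAlgebra α)
    (f : Finset α → Finset α → α) (X A : Finset α) : α :=
  E.sub (f X {E.one}) (f X (A \ X))

end EffectAlgebra

namespace EffectAlgebra

variable {α : Type u} (E : EffectAlgebra α)

lemma cancel {a b c d : α} (h1 : E.add a b = some d) (h2 : E.add a c = some d) :
    b = c := by
  obtain ⟨d', hd'⟩ := (E.orthosupp d).exists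
  have hb : E.add b a = some d := (E.add_comm b a).trans h1
  have hc : E.add c a = some d := (E.add_comm c a).trans h2
  obtain ⟨ad', had', hbad'⟩ := E.add_assoc b a d' d E.one hb hd'
  obtain ⟨ad'2, had'2, hcad'⟩ := E.add_assoc c a d' d E.one hc hd'
  have he : ad'2 = ad' := by
    rw [had'] at had'2; exact (Option.some_injective α had'2).symm
  rw [he] at hcad'
  obtain ⟨w, hw, huniq⟩ := E.orthosupp ad'
  have h1' : E.add ad' b = some E.one := (E.add_comm ad' b).trans hbad'
  have h2' : E.add ad' c = some E.one := (E.add_comm ad' c).trans hcad'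
  exact (huniq b h1').trans (huniq c h2').symm

lemma add_zero' (b : α) : E.add b E.zero = some b := by
  have h1 : E.add E.one E.zero = some E.one := by
    obtain ⟨z, hz⟩ := (E.orthosupp E.one).exists
    have hz0 : z = E.zero := E.add_one z E.one ((E.add_comm z E.one).trans hz)
    rwa [hz0] at hz
  obtain ⟨b', hb'⟩ := (E.orthosupp b).exists
  have hb'b : E.add b' b = some E.one := (E.add_comm b' b).trans hb'
  obtain ⟨bz, hbz, hb'bz⟩ := E.add_assoc b' b E.zero E.one E.one hb'b h1
  have : bz = b := E.cancel hb'bz hb'b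
  rwa [this] at hbz

lemma sub_spec {a b : α} (h : E.le a b) : E.add a (E.sub b a) = some b := by
  have h' : ∃ c, E.add a c = some b := h
  unfold sub
  rw [dif_pos h']
  exact h'.choose_spec

lemma sub_eq {a b c : α} (h : E.add a c = some b) : E.sub b a = c :=
  E.cancel (E.sub_spec ⟨c, h⟩) h

lemma sub_zero' (b : α) : E.sub b E.zero = b :=
  E.sub_eq ((E.add_comm E.zero b).trans (E.add_zero' b))

lemma le_trans' {a b c : α} (h1 : E.le a b) (h2 : E.le b c) : E.le a c := by
  obtain ⟨x, hx⟩ := h1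
  obtain ⟨y, hy⟩ := h2
  obtain ⟨xy, _, hxy⟩ := E.add_assoc a x y b c hx hy
  exact ⟨xy, hxy⟩

lemma le_refl' (a : α) : E.le a a := ⟨E.zero, E.add_zero' a⟩

/-- Reassociation in the other direction. -/
lemma assoc' {a b c bc abc : α} (h1 : E.add b c = some bc)
    (h2 : E.add a bc = some abc) :
    ∃ ab, E.add a b = some ab ∧ E.add ab c = some abc := by
  have h2' : E.add bc a = some abc := (E.add_comm bc a).trans h2
  obtain ⟨ca, hca, hbca⟩ := E.add_assoc b c a bc abc h1 h2'
  have hbca' : E.add ca b = some abc := (E.add_comm ca b).trans hbca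
  obtain ⟨ab, hab, hcab⟩ := E.add_assoc c a b ca abc hca hbca'
  exact ⟨ab, hab, (E.add_comm ab c).trans hcab⟩

end EffectAlgebra

/-- Single-insertion step of antitonicity. -/
theorem strongCSM_step {α : Type u} [DecidableEq α] (E : EffectAlgebra α)
    (S : Set α) (f : Finset α → Finset α → α) (hf : E.IsStrongCSM S f)
    (U V : Finset α) (c : α) (hU : ↑U ⊆ S) (hV : ↑V ⊆ S) (hc : c ∈ S) :
    E.le (f (insert c U) V) (f U V) := by
  obtain ⟨h1S, hmono, hle1, hempty, hsing, hstar⟩ := hf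
  have hcU : ↑(insert c U) ⊆ S := by
    rw [Finset.coe_insert]; exact Set.insert_subset hc hU
  have hcV : ↑(insert c V) ⊆ S := by
    rw [Finset.coe_insert]; exact Set.insert_subset hc hV
  have hcs : ↑({c} : Finset α) ⊆ S := by
    rw [Finset.coe_singleton]; exact Set.singleton_subset_iff.mpr hc
  -- x := ⟨U∪c|1⟩ ⊖ ⟨U∪c|V⟩
  set a := f (insert c U) V with ha
  set b := f U V with hb
  set A := f (insert c U) {E.one} with hA
  set B := f U (insert c V) with hB
  have hxle : E.le a A := hle1 (insert c U) V hcU hV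
  have hx : E.add a (E.sub A a) = some A := E.sub_spec hxle
  -- e* with V
  have hstarV : E.sub A a = E.sub B b := hstar U V c hU hV hc
  have hble : E.le b B := hmono U V (insert c V) hU hV hcV (Finset.subset_insert c V)
  have hx2 : E.add b (E.sub A a) = some B := by
    rw [hstarV]; exact E.sub_spec hble
  -- e* with ∅ : A = f U {c}
  have h3 : A = f U {c} := by
    have := hstar U ∅ c hU (by simp) hc
    rw [hempty (insert c U) hcU, hempty U hU] at this
    rw [E.sub_zero', E.sub_zero'] at this
    simpa using this
  -- A ≤ B
  have hAB : E.le A B := by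
    rw [h3]
    exact hmono U {c} (insert c V) hU hcs hcV
      (Finset.singleton_subset_iff.mpr (Finset.mem_insert_self c V))
  obtain ⟨t, ht⟩ := hAB
  set x := E.sub A a with hxdef
  -- a ⊕ (x ⊕ t) = B
  obtain ⟨xt, hxt, haxt⟩ := E.add_assoc a x t A B hx ht
  have htx : E.add t x = some xt := (E.add_comm t x).trans hxt
  obtain ⟨at', hat', hatx⟩ := E.assoc' htx haxt
  -- cancel x : at' = b
  have h1' : E.add x at' = some B := (E.add_comm x at').trans hatx
  have h2' : E.add x b = some B := (E.add_comm x b).trans hx2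
  have : at' = b := E.cancel h1' h2'
  exact ⟨t, this ▸ hat'⟩

/-- A strong compatibility support mapping is antitone in its first
argument. -/
theorem strongCSM_antitone_left {α : Type u} [DecidableEq α] (E : EffectAlgebra α)
    (S : Set α) (f : Finset α → Finset α → α) (hf : E.IsStrongCSM S f)
    (U₁ U₂ V : Finset α) (hU₂ : ↑U₂ ⊆ S) (hV : ↑V ⊆ S)
    (hU : U₁ ⊆ U₂) : E.le (f U₂ V) (f U₁ V) := by
  have hU₁ : ↑U₁ ⊆ S := fun x hx => hU₂ (Finset.mem_coe.mpr (hU hx))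
  have key : ∀ W : Finset α, ↑W ⊆ S → E.le (f (W ∪ U₁) V) (f U₁ V) := by
    intro W
    induction W using Finset.induction_on with
    | empty => intro _; simpa using E.le_refl' (f U₁ V)
    | @insert c W hcW ih =>
      intro hWS
      have hcS : c ∈ S := hWS (by simp)
      have hWS' : ↑W ⊆ S := fun x hx => hWS (by simp [hx])
      have h1 : E.le (f (insert c (W ∪ U₁)) V) (f (W ∪ U₁) V) :=
        strongCSM_step E S f hf (W ∪ U₁) V c
          (by rw [Finset.coe_union]; exact Set.union_subset hWS' hU₁) hV hcS
      rw [← Finset.insert_union] at h1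
      exact E.le_trans' h1 (ih hWS')
  have hsplit : (U₂ \ U₁) ∪ U₁ = U₂ := Finset.sdiff_union_of_subset hU
  have := key (U₂ \ U₁)
    (Set.Subset.trans (Finset.coe_subset.mpr (Finset.sdiff_subset)) hU₂)
  rwa [hsplit] at this
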